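/- (Closed form underlying Theorem 2.) Let u, s, t be three distinct vertices with dist(s,u) ≤ dist(t,u), and set D = dist(t,u). For d ∈ ℕ let M_{≤d} = |{v ∈ V\{s,t} : dist(v,u) ≤ d}| + 1 and M_{<d} = |{v ∈ V\{s,t} : dist(v,u) < d}| + 1. Then the Shapley interaction index of s and t in the single-node closeness game ν_u equals I^{Shapley}_{s,t}(ν_u) = −f(D)/M_{≤D} + Σ_{d=D+1}^{Δ} f(d)·(1/M_{<d} − 1/M_{≤d}), where Δ = max_{v∈V} dist(v,u). -/

import Mathlib

/-!
For a coalition `C ⊆ V \ {s, t}` write `e = dist(C, u)`, with `e = ∞` and `f(∞) = 0` for `C = ∅`.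
Since `dist(s, u) ≤ D`, the synergy of `s` and `t` in `C` is `f(e) − f(D)` when `e > D` and `0`
otherwise, and `f(e)[e > D] = ∑_{D < d ≤ Δ} f(d) · ([e ≥ d] − [e > d])`. The index is therefore a
combination of the probabilities that a random ordering puts the merged player before every
member of `B = {v ∈ V \ {s, t} : dist(v, u) < d}` (resp. `≤ d`). Swapping two elements of
`B ∪ {s}` shows that each of them is equally likely to come first, so this probability is
`1 / (|B| + 1)`.
-/

open Finset

/-- The single-node closeness game `ν_u`: a coalition `C` is worth `f(dist(C,u))`
(where `dist(C,u) = min_{c ∈ C} dist(c,u)`) if `C` is nonempty, and `0` otherwise. -/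
noncomputable def nuSingle {V : Type*} (G : SimpleGraph V) (f : ℕ → ℝ) (u : V)
    (C : Finset V) : ℝ :=
  if h : C.Nonempty then f (C.inf' h fun c => G.dist c u) else 0

/-- The synergy of `s` and `t` in the context of a coalition `C ⊆ V \ {s,t}`:
`S_ν(C,s,t) = ν(C∪{s,t}) − ν(C∪{s}) − ν(C∪{t}) + ν(C)`. -/
noncomputable def synergy {V : Type*} [DecidableEq V] (ν : Finset V → ℝ)
    (C : Finset V) (s t : V) : ℝ :=
  ν (insert s (insert t C)) - ν (insert s C) - ν (insert t C) + ν C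

/-- The Shapley interaction index of `s ≠ t` in `ν`:
`I^{Shapley}_{s,t}(ν) = (1/(n−1)!) · Σ_π S_ν(C_π, s, t)`, where `π` ranges over the
`(n−1)!` linear orderings of the `(n−1)`-element set obtained from `V` by merging `s`
and `t` into a single element (modelled as the subtype `{v // v ≠ t}`, with `s`
playing the role of the merged element), and `C_π ⊆ V\{s,t}` is the set of elements
preceding the merged element in `π`. -/
noncomputable def IShapley {V : Type*} [Fintype V] [DecidableEq V]
    (ν : Finset V → ℝ) (s t : V) (hst : s ≠ t) : ℝ :=
  (∑ π : Fin (Fintype.card V - 1) ≃ {v : V // v ≠ t},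
      synergy ν
        ((univ.filter fun v : {v : V // v ≠ t} => π.symm v < π.symm ⟨s, hst⟩).image
          Subtype.val) s t)
    / ((Fintype.card V - 1).factorial : ℝ)

section Orderings

variable {α W : Type*} [LinearOrder α] [DecidableEq W]

lemma forall_le_symm_trans_swap {S : Finset W} {x w : W} (hx : x ∈ S) (hw : w ∈ S)
    {π : α ≃ W} (h : ∀ v ∈ S, π.symm x ≤ π.symm v) :
    ∀ v ∈ S, (π.trans (Equiv.swap x w)).symm w ≤ (π.trans (Equiv.swap x w)).symm v := by
  intro v hv
  rw [Equiv.symm_trans_apply, Equiv.symm_trans_apply, Equiv.symm_swap, Equiv.swap_apply_right]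
  refine h _ ?_
  rw [Equiv.swap_apply_def]
  split_ifs <;> assumption

variable [Fintype α] [Fintype W]

lemma card_filter_forall_le_eq_of_mem {S : Finset W} {x w : W} (hx : x ∈ S) (hw : w ∈ S) :
    #{π : α ≃ W | ∀ v ∈ S, π.symm x ≤ π.symm v} = #{π : α ≃ W | ∀ v ∈ S, π.symm w ≤ π.symm v} := by
  have hinv : ∀ π : α ≃ W, (π.trans (Equiv.swap x w)).trans (Equiv.swap x w) = π := fun π => by
    ext; simp
  refine card_nbij' (·.trans (Equiv.swap x w)) (·.trans (Equiv.swap x w)) ?_ ?_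
    (fun π _ => hinv π) (fun π _ => hinv π)
  · intro π hπ
    simp only [coe_filter, mem_univ, true_and, Set.mem_ofPred_eq] at hπ ⊢
    exact forall_le_symm_trans_swap hx hw hπ
  · intro π hπ
    simp only [coe_filter, mem_univ, true_and, Set.mem_ofPred_eq] at hπ ⊢
    rw [Equiv.swap_comm]
    exact forall_le_symm_trans_swap hw hx hπ

lemma card_add_one_mul_card_filter_forall_lt {A : Finset W} {x : W} (hx : x ∉ A) :
    (#A + 1) * #{π : α ≃ W | ∀ a ∈ A, π.symm x < π.symm a} = Fintype.card (α ≃ W) := by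
  set S := insert x A
  let first : W → Finset (α ≃ W) := fun w => {π | ∀ v ∈ S, π.symm w ≤ π.symm v}
  have hcover : S.biUnion first = univ := by
    refine eq_univ_of_forall fun π => mem_biUnion.2 ?_
    obtain ⟨w, hwS, hw⟩ := S.exists_min_image π.symm ⟨x, mem_insert_self x A⟩
    exact ⟨w, hwS, mem_filter.2 ⟨mem_univ π, hw⟩⟩
  have hdisj : (S : Set W).PairwiseDisjoint first := by
    intro w₁ h₁ w₂ h₂ hne
    refine disjoint_left.2 fun π hπ₁ hπ₂ => hne (π.symm.injective ?_)
    exact le_antisymm ((mem_filter.1 hπ₁).2 w₂ h₂) ((mem_filter.1 hπ₂).2 w₁ h₁)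
  have hfirst_x : first x = ({π | ∀ a ∈ A, π.symm x < π.symm a} : Finset (α ≃ W)) := by
    refine filter_congr fun π _ => ?_
    simp only [S, forall_mem_insert, le_refl, true_and]
    refine forall₂_congr fun a ha => ⟨fun h => h.lt_of_ne ?_, le_of_lt⟩
    exact fun h => hx (π.symm.injective h ▸ ha)
  calc (#A + 1) * #{π : α ≃ W | ∀ a ∈ A, π.symm x < π.symm a}
      = ∑ w ∈ S, #(first w) := by
        rw [sum_congr rfl fun w hw => card_filter_forall_le_eq_of_mem hw (mem_insert_self x A),
          sum_const, card_insert_of_notMem hx, smul_eq_mul, ← hfirst_x]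
    _ = Fintype.card (α ≃ W) := by rw [← card_biUnion hdisj, hcover, card_univ]

end Orderings

section ClosenessGame

variable {V : Type*} (G : SimpleGraph V) (f : ℕ → ℝ) (u : V)

lemma nuSingle_of_nonempty {C : Finset V} (hC : C.Nonempty) :
    nuSingle G f u C = f (C.inf' hC fun c => G.dist c u) :=
  dif_pos hC

lemma ite_forall_lt_nuSingle_eq_sum {C : Finset V} {Δ : ℕ} (hΔ : ∀ v ∈ C, G.dist v u ≤ Δ) (D : ℕ) :
    (if ∀ v ∈ C, D < G.dist v u then nuSingle G f u C else 0) =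
      ∑ d ∈ Icc (D + 1) Δ, f d * ((if ∀ v ∈ C, d ≤ G.dist v u then 1 else 0)
        - (if ∀ v ∈ C, d < G.dist v u then 1 else 0)) := by
  rcases C.eq_empty_or_nonempty with rfl | hC
  · simp [nuSingle]
  · have he : (C.inf' hC fun c => G.dist c u) ≤ Δ := by
      obtain ⟨v, hv, hve⟩ := exists_mem_eq_inf' hC fun c => G.dist c u
      exact hve.le.trans (hΔ v hv)
    simp only [← le_inf'_iff hC, ← lt_inf'_iff hC, nuSingle_of_nonempty G f u hC]
    generalize C.inf' hC (fun c => G.dist c u) = e at he ⊢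
    have hterm : ∀ d, f d * ((if d ≤ e then 1 else 0) - (if d < e then 1 else 0)) =
        if d = e then f d else 0 := by
      intro d
      rcases lt_trichotomy d e with h | rfl | h
      · simp [h.le, h, h.ne]
      · simp
      · simp [not_le.2 h, not_lt.2 h.le, h.ne']
    simp only [hterm, sum_ite_eq', mem_Icc, he, and_true, Nat.succ_le_iff]

variable [DecidableEq V]

lemma nuSingle_insert {C : Finset V} (hC : C.Nonempty) (a : V) :
    nuSingle G f u (insert a C) = f (G.dist a u ⊓ C.inf' hC fun c => G.dist c u) := by
  rw [nuSingle_of_nonempty G f u (insert_nonempty a C), inf'_insert hC]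

lemma synergy_nuSingle_eq_ite {s t : V} (hd : G.dist s u ≤ G.dist t u) (C : Finset V) :
    synergy (nuSingle G f u) C s t =
      if ∀ v ∈ C, G.dist t u < G.dist v u then nuSingle G f u C - f (G.dist t u) else 0 := by
  rcases C.eq_empty_or_nonempty with rfl | hC
  · simp [synergy, nuSingle, hd]
  · set e := C.inf' hC fun c => G.dist c u
    rw [synergy, nuSingle_insert G f u (insert_nonempty t C), inf'_insert hC,
      nuSingle_insert G f u hC, nuSingle_insert G f u hC, nuSingle_of_nonempty G f u hC,
      ← inf_assoc, inf_eq_left.2 hd]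
    simp only [← lt_inf'_iff hC]
    by_cases h : G.dist t u < e
    · rw [if_pos h, inf_eq_left.2 h.le]; ring
    · rw [if_neg h, inf_eq_right.2 (not_lt.1 h)]; ring

lemma synergy_nuSingle_eq_sum {s t : V} (hd : G.dist s u ≤ G.dist t u) {C : Finset V} {Δ : ℕ}
    (hΔ : ∀ v ∈ C, G.dist v u ≤ Δ) :
    synergy (nuSingle G f u) C s t =
      -f (G.dist t u) * (if ∀ v ∈ C, G.dist t u < G.dist v u then 1 else 0)
        + ∑ d ∈ Icc (G.dist t u + 1) Δ, f d * ((if ∀ v ∈ C, d ≤ G.dist v u then 1 else 0)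
          - (if ∀ v ∈ C, d < G.dist v u then 1 else 0)) := by
  rw [synergy_nuSingle_eq_ite G f u hd, ← ite_forall_lt_nuSingle_eq_sum G f u hΔ]
  split_ifs <;> ring

end ClosenessGame

section ShapleyInteraction

variable {V : Type*} [Fintype V] [DecidableEq V] {s t : V} (hst : s ≠ t)

def precedingCoalition (π : Fin (Fintype.card V - 1) ≃ {v : V // v ≠ t}) : Finset V :=
  ({v | π.symm v < π.symm ⟨s, hst⟩} : Finset {v : V // v ≠ t}).image Subtype.val

lemma IShapley_eq_sum_synergy_precedingCoalition (ν : Finset V → ℝ) :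
    IShapley ν s t hst =
      (∑ π, synergy ν (precedingCoalition hst π) s t) / (Fintype.card V - 1).factorial :=
  rfl

lemma disjoint_precedingCoalition_iff {B : Finset V} (hs : s ∉ B)
    (π : Fin (Fintype.card V - 1) ≃ {v : V // v ≠ t}) :
    Disjoint (precedingCoalition hst π) B ↔
      ∀ w ∈ B.subtype (· ≠ t), π.symm ⟨s, hst⟩ < π.symm w := by
  simp only [precedingCoalition, disjoint_left, forall_mem_image, mem_filter, mem_univ, true_and,
    mem_subtype]
  refine forall_congr' fun w => ⟨fun h hwB => lt_of_not_ge fun hle => h ?_ hwB, fun h hlt hwB => ?_⟩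
  · refine hle.lt_of_ne fun heq => hs ?_
    rwa [π.symm.injective heq] at hwB
  · exact (h hwB).asymm hlt

lemma card_add_one_mul_card_filter_disjoint_precedingCoalition {B : Finset V} (hs : s ∉ B)
    (ht : t ∉ B) :
    (#B + 1) * #{π | Disjoint (precedingCoalition hst π) B} = (Fintype.card V - 1).factorial := by
  have hcardB : #(B.subtype (· ≠ t)) = #B := by
    rw [card_subtype, filter_true_of_mem fun v hv => ne_of_mem_of_not_mem hv ht]
  have hcard : Fintype.card {v : V // v ≠ t} = Fintype.card V - 1 := by
    simp [Fintype.card_subtype_compl]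
  simp only [disjoint_precedingCoalition_iff hst hs]
  rw [← hcardB, card_add_one_mul_card_filter_forall_lt (by simpa using hs),
    Fintype.card_equiv (Fintype.equivOfCardEq (by rw [hcard, Fintype.card_fin])), Fintype.card_fin]

/- Phrased with `Disjoint` because the `Decidable` instance of `∀ v ∈ C, P v` found with
`Fintype V` in scope differs from the one in `synergy_nuSingle_eq_sum`, so the `∀` form would not
rewrite those sums. -/
lemma sum_ite_disjoint_precedingCoalition_filter (Q : V → Prop) [DecidablePred Q] :
    ∑ π, (if Disjoint (precedingCoalition hst π) {v ∈ univ \ {s, t} | Q v} then (1 : ℝ) else 0) =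
      (Fintype.card V - 1).factorial / ((#{v ∈ univ \ {s, t} | Q v} + 1 : ℕ) : ℝ) := by
  rw [sum_boole, eq_div_iff (by positivity), ← Nat.cast_mul, mul_comm,
    card_add_one_mul_card_filter_disjoint_precedingCoalition hst (by simp) (by simp)]

lemma forall_mem_precedingCoalition_iff_disjoint (P : V → Prop) [DecidablePred P]
    (π : Fin (Fintype.card V - 1) ≃ {v : V // v ≠ t}) :
    (∀ v ∈ precedingCoalition hst π, P v) ↔
      Disjoint (precedingCoalition hst π) {v ∈ univ \ {s, t} | ¬P v} := by
  simp only [precedingCoalition, disjoint_left, forall_mem_image, mem_filter, mem_univ, true_and,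
    mem_sdiff, mem_insert, mem_singleton, not_or, not_and, not_not]
  refine forall_congr' fun w => imp_congr_right fun hlt => ⟨fun h _ => h, fun h => h ⟨?_, w.2⟩⟩
  rintro rfl
  exact hlt.false

end ShapleyInteraction

theorem IShapley_nuSingle_closed_form_general
    {V : Type*} [Fintype V] [DecidableEq V] (G : SimpleGraph V)
    (f : ℕ → ℝ)
    (u s t : V) (hst : s ≠ t)
    (hd : G.dist s u ≤ G.dist t u)
    (D : ℕ) (hD : D = G.dist t u)
    (Mle Mlt : ℕ → ℕ)
    (hMle : ∀ d, Mle d = ((univ \ {s, t} : Finset V).filter fun v => G.dist v u ≤ d).card + 1)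
    (hMlt : ∀ d, Mlt d = ((univ \ {s, t} : Finset V).filter fun v => G.dist v u < d).card + 1)
    (Δ : ℕ) (hΔ : Δ = univ.sup fun v => G.dist v u) :
    IShapley (nuSingle G f u) s t hst
      = -f D / (Mle D : ℝ)
          + ∑ d ∈ Finset.Icc (D + 1) Δ,
              f d * (1 / (Mlt d : ℝ) - 1 / (Mle d : ℝ)) := by
  subst hD
  obtain rfl : Mle = _ := funext hMle
  obtain rfl : Mlt = _ := funext hMlt
  have hbound : ∀ v, G.dist v u ≤ Δ := fun v => hΔ ▸ le_sup (f := fun w => G.dist w u) (mem_univ v)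
  rw [IShapley_eq_sum_synergy_precedingCoalition, div_eq_iff (by positivity)]
  simp only [synergy_nuSingle_eq_sum G f u hd fun v _ => hbound v,
    forall_mem_precedingCoalition_iff_disjoint, not_lt, not_le, sum_add_distrib, ← mul_sum]
  rw [sum_comm]
  simp only [← mul_sum, sum_sub_distrib, sum_ite_disjoint_precedingCoalition_filter]
  rw [add_mul, sum_mul]
  congr 1
  · ring
  · exact sum_congr rfl fun d _ => by ring

/-- Closed form underlying Theorem 2: for distinct `u, s, t` with
`dist(s,u) ≤ dist(t,u)` and `D = dist(t,u)`, letting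
`M_{≤d} = |{v ∈ V\{s,t} : dist(v,u) ≤ d}| + 1`, `M_{<d} = |{v ∈ V\{s,t} : dist(v,u) < d}| + 1`
and `Δ = max_{v ∈ V} dist(v,u)`, the Shapley interaction index of `s` and `t` in the
single-node closeness game `ν_u` equals
`−f(D)/M_{≤D} + Σ_{d=D+1}^{Δ} f(d)·(1/M_{<d} − 1/M_{≤d})`. -/
theorem IShapley_nuSingle_closed_form
    {V : Type*} [Fintype V] [DecidableEq V] (G : SimpleGraph V)
    (hG : G.Connected) (hn : 3 ≤ Fintype.card V) (f : ℕ → ℝ)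
    (u s t : V) (hus : u ≠ s) (hut : u ≠ t) (hst : s ≠ t)
    (hd : G.dist s u ≤ G.dist t u)
    (D : ℕ) (hD : D = G.dist t u)
    (Mle Mlt : ℕ → ℕ)
    (hMle : ∀ d, Mle d = ((univ \ {s, t} : Finset V).filter fun v => G.dist v u ≤ d).card + 1)
    (hMlt : ∀ d, Mlt d = ((univ \ {s, t} : Finset V).filter fun v => G.dist v u < d).card + 1)
    (Δ : ℕ) (hΔ : Δ = univ.sup fun v => G.dist v u) :
    IShapley (nuSingle G f u) s t hst
      = -f D / (Mle D : ℝ)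
          + ∑ d ∈ Finset.Icc (D + 1) Δ,
              f d * (1 / (Mlt d : ℝ) - 1 / (Mle d : ℝ)) :=
  IShapley_nuSingle_closed_form_general G f u s t hst hd D hD Mle Mlt hMle hMlt Δ hΔ
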